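/- arXiv:2209.04191 — 2 statements merged into one kernel-verified Lean document; each statement's English description precedes it below -/
import Mathlib

section
/- Let N ≥ 1 and let g₁, g₂ ∈ L²(ℝ) be continuous with ∑_{k∈ℤ} sup_{t∈[0,1]}|g_j(t+k)| < ∞ for j=1,2. For coefficients a, b ∈ ℂ^N define V_{g}φ_a(x,ξ) = ∑_{n=0}^{N-1} a_n e^{-2πiξn/N} Z(conj∘g)(n/N - x, ξ). Then the Moyal-type orthogonality relation holds: ∫_0^N ∫_0^1 V_{g₁}φ_a(x,ξ) · conj(V_{g₂}φ_b(x,ξ)) dx dξ = N · (∑_{n=0}^{N-1} a_n conj(b_n)) · ⟨g₂, g₁⟩_{L²}. -/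
open Complex Finset MeasureTheory

/-- The Zak transform. -/
noncomputable def zak (h : ℝ → ℂ) (x ξ : ℝ) : ℂ :=
  ∑' k : ℤ, h (x - k) * Complex.exp (2 * Real.pi * Complex.I * k * ξ)

/-- The STFT of `φ = ∑_{n=0}^{N-1} a_n ε_n ∈ S_N` with window `g`. -/
noncomputable def stftSN (g : ℝ → ℂ) (N : ℕ) (a : Fin N → ℂ) (x ξ : ℝ) : ℂ :=
  ∑ n : Fin N, a n * Complex.exp (-2 * Real.pi * Complex.I * ξ * (n : ℝ) / N) *
    zak (fun t => (starRingEnd ℂ) (g t)) ((n : ℝ) / N - x) ξ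

/-! Expanding both Zak series, `V_{g₁}φ_a(x, ξ) · conj V_{g₂}φ_b(x, ξ)` is the series over
`(n, m, k, j)` of `a_n conj b_m · conj g₁(n/N - x - k) g₂(m/N - x - j) · e^{2πi ξ q / N}` with
`q = (m - n) + (k - j) N`. For `x ∈ [0, 1]` the arguments `n/N - x` stay in `[-1, 1]`, so the
amalgam condition dominates the terms uniformly and both integrals can be taken termwise.
Integrating `e^{2πi ξ q / N}` over `ξ ∈ [0, N]` leaves `N` if `q = 0` and `0` otherwise, and
`q = 0` forces `n = m`, `k = j` because `|m - n| < N`. On the diagonal the translates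
`[k, k + 1]` tile `ℝ`, so `∑ₖ ∫₀¹ (g₂ conj g₁)(n/N - x - k) dx = ⟨g₂, g₁⟩`. -/

open scoped Real Interval ComplexConjugate

noncomputable section

section LocalSup

variable {E : Type*} [NormedAddCommGroup E] {g : ℝ → E}

def localSup (g : ℝ → E) (k : ℤ) : ℝ := ⨆ t : Set.Icc (0 : ℝ) 1, ‖g (t + k)‖

lemma localSup_nonneg (g : ℝ → E) (k : ℤ) : 0 ≤ localSup g k :=
  Real.iSup_nonneg fun _ => norm_nonneg _

lemma norm_le_localSup (hg : Continuous g) {t : ℝ} (ht : t ∈ Set.Icc (0 : ℝ) 1) (k : ℤ) :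
    ‖g (t + k)‖ ≤ localSup g k :=
  le_ciSup (f := fun t : Set.Icc (0 : ℝ) 1 => ‖g (t + k)‖)
    (isCompact_range (by fun_prop)).bddAbove ⟨t, ht⟩

def envelope (g : ℝ → E) (k : ℤ) : ℝ := localSup g (-k) + localSup g (-k - 1)

lemma envelope_nonneg (g : ℝ → E) (k : ℤ) : 0 ≤ envelope g k :=
  add_nonneg (localSup_nonneg g _) (localSup_nonneg g _)

lemma norm_le_envelope (hg : Continuous g) {y : ℝ} (hy : y ∈ Set.Icc (-1 : ℝ) 1) (k : ℤ) :
    ‖g (y - k)‖ ≤ envelope g k := by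
  obtain ⟨hy₁, hy₂⟩ := hy
  rcases le_total 0 y with hy₀ | hy₀
  · have h := norm_le_localSup hg ⟨hy₀, hy₂⟩ (-k)
    rw [Int.cast_neg, ← sub_eq_add_neg] at h
    unfold envelope
    linarith [localSup_nonneg g (-k - 1)]
  · have h := norm_le_localSup hg (t := y + 1) ⟨by linarith, by linarith⟩ (-k - 1)
    rw [show y + 1 + ((-k - 1 : ℤ) : ℝ) = y - k by push_cast; ring] at h
    unfold envelope
    linarith [localSup_nonneg g (-k)]

lemma Summable.envelope (hg : Summable (localSup g)) : Summable (envelope g) :=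
  (hg.comp_injective neg_injective).add (hg.comp_injective fun _ _ h => by simpa using h)

end LocalSup

theorem hasSum_intervalIntegral_of_norm_le {E : Type*} [NormedAddCommGroup E] [NormedSpace ℝ E]
    {ι : Type*} [Countable ι] {F : ι → ℝ → E} {f : ℝ → E} {a b : ℝ} {u : ι → ℝ}
    (hF : ∀ i, Continuous (F i)) (hu : Summable u) (hFu : ∀ i, ∀ t ∈ Ι a b, ‖F i t‖ ≤ u i)
    (hFf : ∀ t ∈ Ι a b, HasSum (fun i => F i t) (f t)) :
    HasSum (fun i => ∫ t in a..b, F i t) (∫ t in a..b, f t) :=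
  intervalIntegral.hasSum_integral_of_dominated_convergence (fun i _ => u i)
    (fun i => (hF i).aestronglyMeasurable) (fun i => .of_forall (hFu i))
    (.of_forall fun _ _ => hu) intervalIntegrable_const (.of_forall hFf)

theorem hasSum_intervalIntegral_comp_add_intCast {E : Type*} [NormedAddCommGroup E]
    [NormedSpace ℝ E] {f : ℝ → E} (hf : Integrable f) :
    HasSum (fun k : ℤ => ∫ x in (0 : ℝ)..1, f (x + k)) (∫ x, f x) := by
  have h := hasSum_integral_iUnion (fun k : ℤ => measurableSet_Ioc)
    (Set.pairwise_disjoint_Ioc_intCast (α := ℝ))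
    (by rw [iUnion_Ioc_intCast]; exact hf.integrableOn)
  rw [iUnion_Ioc_intCast, Measure.restrict_univ] at h
  refine h.congr_fun fun k => ?_
  rw [intervalIntegral.integral_comp_add_right, zero_add, add_comm,
    intervalIntegral.integral_of_le (by linarith)]

lemma norm_exp_two_pi_I_mul (t : ℝ) : ‖exp (2 * π * I * t)‖ = 1 := by
  rw [show 2 * π * I * t = ((2 * π * t : ℝ) : ℂ) * I by push_cast; ring,
    norm_exp_ofReal_mul_I]

theorem integral_exp_two_pi_I_intCast_div {N : ℕ} (hN : N ≠ 0) (q : ℤ) :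
    ∫ ξ in (0 : ℝ)..N, exp (2 * π * I * ((q / N * ξ : ℝ))) = if q = 0 then (N : ℂ) else 0 := by
  split_ifs with hq
  · simp [hq]
  have hc : 2 * π * I * (q / N) ≠ 0 := by
    have : (q : ℂ) ≠ 0 := by exact_mod_cast hq
    simp [Real.pi_ne_zero, I_ne_zero, hN, this]
  have hperiod : exp (2 * π * I * (q / N) * N) = 1 := by
    rw [show 2 * π * I * (q / N) * N = q * (2 * π * I) by field_simp]
    exact exp_int_mul_two_pi_mul_I q
  push_cast
  simp_rw [← mul_assoc]
  rw [integral_exp_mul_complex hc]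
  simp [hperiod]

lemma norm_zak_summand (h : ℝ → ℂ) (y ξ : ℝ) (k : ℤ) :
    ‖h (y - k) * exp (2 * π * I * k * ξ)‖ = ‖h (y - k)‖ := by
  rw [norm_mul, show 2 * π * I * k * ξ = 2 * π * I * ((k * ξ : ℝ) : ℂ) by push_cast; ring,
    norm_exp_two_pi_I_mul, mul_one]

theorem hasSum_zak_mul_conj_zak {h₁ h₂ : ℝ → ℂ} {y₁ y₂ : ℝ}
    (hs₁ : Summable fun k : ℤ => ‖h₁ (y₁ - k)‖) (hs₂ : Summable fun k : ℤ => ‖h₂ (y₂ - k)‖)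
    (ξ : ℝ) :
    HasSum (fun p : ℤ × ℤ => h₁ (y₁ - p.1) * conj (h₂ (y₂ - p.2)) *
        exp (2 * π * I * (((p.1 - p.2) * ξ : ℝ) : ℂ)))
      (zak h₁ y₁ ξ * conj (zak h₂ y₂ ξ)) := by
  have hu : Summable fun k : ℤ => ‖h₁ (y₁ - k) * exp (2 * π * I * k * ξ)‖ := by
    simpa only [norm_zak_summand] using hs₁
  have hv : Summable fun k : ℤ => ‖conj (h₂ (y₂ - k) * exp (2 * π * I * k * ξ))‖ := by
    simpa only [RCLike.norm_conj, norm_zak_summand] using hs₂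
  rw [zak, zak, conj_tsum, tsum_mul_tsum_of_summable_norm hu hv]
  refine (summable_mul_of_summable_norm hu hv).hasSum.congr_fun fun p => ?_
  rw [map_mul, ← exp_conj, mul_mul_mul_comm, ← exp_add]
  congr 2
  simp only [map_mul, conj_ofReal, conj_I, map_ofNat, map_intCast]
  push_cast
  ring

/-- `((n, m), (k, j))`: atoms `n, m` of `φ_a, φ_b` and indices `k, j` of the two Zak series. -/
abbrev MoyalIndex (N : ℕ) := (Fin N × Fin N) × (ℤ × ℤ)

def crossTerm (g₁ g₂ : ℝ → ℂ) (N : ℕ) (r : MoyalIndex N) (x : ℝ) : ℂ :=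
  conj (g₁ (r.1.1 / N - x - r.2.1)) * g₂ (r.1.2 / N - x - r.2.2)

def freq (N : ℕ) (r : MoyalIndex N) : ℤ := r.1.2 - r.1.1 + (r.2.1 - r.2.2) * N

def moyalTerm (g₁ g₂ : ℝ → ℂ) (N : ℕ) (a b : Fin N → ℂ) (r : MoyalIndex N) (x ξ : ℝ) : ℂ :=
  a r.1.1 * conj (b r.1.2) * crossTerm g₁ g₂ N r x *
    exp (2 * π * I * ((freq N r / N * ξ : ℝ) : ℂ))

def moyalBound (g₁ g₂ : ℝ → ℂ) (N : ℕ) (a b : Fin N → ℂ) (r : MoyalIndex N) : ℝ :=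
  ‖a r.1.1‖ * ‖b r.1.2‖ * (envelope g₁ r.2.1 * envelope g₂ r.2.2)

section Moyal

variable {g₁ g₂ : ℝ → ℂ} {N : ℕ}

lemma div_sub_mem_Icc (n : Fin N) {x : ℝ} (hx : x ∈ Set.Icc (0 : ℝ) 1) :
    (n : ℝ) / N - x ∈ Set.Icc (-1 : ℝ) 1 := by
  have hN : (0 : ℝ) < N := by exact_mod_cast n.pos
  have h₀ : 0 ≤ (n : ℝ) / N := by positivity
  have h₁ : (n : ℝ) / N ≤ 1 := (div_le_one hN).2 (by exact_mod_cast n.isLt.le)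
  constructor <;> linarith [hx.1, hx.2]

lemma norm_crossTerm_le (hc₁ : Continuous g₁) (hc₂ : Continuous g₂) (r : MoyalIndex N)
    {x : ℝ} (hx : x ∈ Set.Icc (0 : ℝ) 1) :
    ‖crossTerm g₁ g₂ N r x‖ ≤ envelope g₁ r.2.1 * envelope g₂ r.2.2 := by
  rw [crossTerm, norm_mul, RCLike.norm_conj]
  exact mul_le_mul (norm_le_envelope hc₁ (div_sub_mem_Icc r.1.1 hx) r.2.1)
    (norm_le_envelope hc₂ (div_sub_mem_Icc r.1.2 hx) r.2.2) (norm_nonneg _)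
    (envelope_nonneg _ _)

lemma norm_coeff_mul_exp_le {z : ℂ} {C : ℝ} (α β : ℂ) (hz : ‖z‖ ≤ C) (t : ℝ) :
    ‖α * conj β * z * exp (2 * π * I * t)‖ ≤ ‖α‖ * ‖β‖ * C := by
  rw [norm_mul, norm_exp_two_pi_I_mul, mul_one, norm_mul, norm_mul, RCLike.norm_conj]
  gcongr

lemma summable_moyalBound (hg₁ : Summable (localSup g₁)) (hg₂ : Summable (localSup g₂))
    (a b : Fin N → ℂ) : Summable (moyalBound g₁ g₂ N a b) :=
  (Summable.of_finite (f := fun q : Fin N × Fin N => ‖a q.1‖ * ‖b q.2‖)).mul_of_nonneg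
    (hg₁.envelope.mul_of_nonneg hg₂.envelope (envelope_nonneg g₁) (envelope_nonneg g₂))
    (fun _ => by positivity) (fun _ => mul_nonneg (envelope_nonneg _ _) (envelope_nonneg _ _))

lemma exp_mul_conj_exp_mul_exp (hN : N ≠ 0) (r : MoyalIndex N) (ξ : ℝ) :
    exp (-2 * π * I * ξ * (r.1.1 : ℝ) / N) * conj (exp (-2 * π * I * ξ * (r.1.2 : ℝ) / N)) *
        exp (2 * π * I * (((r.2.1 - r.2.2) * ξ : ℝ) : ℂ)) =
      exp (2 * π * I * ((freq N r / N * ξ : ℝ) : ℂ)) := by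
  rw [← exp_conj, ← exp_add, ← exp_add, freq]
  congr 1
  simp only [map_div₀, map_mul, map_neg, map_ofNat, conj_I, conj_ofReal, map_natCast]
  push_cast
  field_simp
  ring

theorem hasSum_moyalTerm (hN : N ≠ 0) (hc₁ : Continuous g₁) (hc₂ : Continuous g₂)
    (hg₁ : Summable (localSup g₁)) (hg₂ : Summable (localSup g₂)) (a b : Fin N → ℂ)
    {x : ℝ} (hx : x ∈ Set.Icc (0 : ℝ) 1) (ξ : ℝ) :
    HasSum (fun r => moyalTerm g₁ g₂ N a b r x ξ)
      (stftSN g₁ N a x ξ * conj (stftSN g₂ N b x ξ)) := by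
  have hsum : Summable fun r => moyalTerm g₁ g₂ N a b r x ξ :=
    .of_norm_bounded (summable_moyalBound hg₁ hg₂ a b) fun r =>
      norm_coeff_mul_exp_le _ _ (norm_crossTerm_le hc₁ hc₂ r hx) _
  have hzak (g : ℝ → ℂ) (hc : Continuous g) (hg : Summable (localSup g)) (n : Fin N) :
      Summable fun k : ℤ => ‖conj (g ((n : ℝ) / N - x - k))‖ :=
    .of_nonneg_of_le (fun _ => norm_nonneg _)
      (fun k => (RCLike.norm_conj _).trans_le (norm_le_envelope hc (div_sub_mem_Icc n hx) k))
      hg.envelope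
  have hfiber (q : Fin N × Fin N) : HasSum (fun p => moyalTerm g₁ g₂ N a b (q, p) x ξ)
      (a q.1 * exp (-2 * π * I * ξ * (q.1 : ℝ) / N) *
          zak (fun t => conj (g₁ t)) ((q.1 : ℝ) / N - x) ξ *
        conj (b q.2 * exp (-2 * π * I * ξ * (q.2 : ℝ) / N) *
          zak (fun t => conj (g₂ t)) ((q.2 : ℝ) / N - x) ξ)) := by
    have h := (hasSum_zak_mul_conj_zak (h₁ := fun t => conj (g₁ t)) (h₂ := fun t => conj (g₂ t))
      (y₁ := (q.1 : ℝ) / N - x) (y₂ := (q.2 : ℝ) / N - x)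
      (hzak g₁ hc₁ hg₁ q.1) (hzak g₂ hc₂ hg₂ q.2) ξ).mul_left
      (a q.1 * conj (b q.2) * exp (-2 * π * I * ξ * (q.1 : ℝ) / N) *
        conj (exp (-2 * π * I * ξ * (q.2 : ℝ) / N)))
    have hsort (u v w u' v' w' : ℂ) :
        u * v * w * conj (u' * v' * w') = u * conj u' * v * conj v' * (w * conj w') := by
      simp only [map_mul]
      ring
    rw [hsort]
    refine h.congr_fun fun p => ?_
    rw [moyalTerm, ← exp_mul_conj_exp_mul_exp hN (q, p), crossTerm, RCLike.conj_conj]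
    ring
  rw [stftSN, stftSN, map_sum, Finset.sum_mul_sum, ← Fintype.sum_prod_type',
    (hasSum_fintype _).unique (hsum.hasSum.prod_fiberwise hfiber)]
  exact hsum.hasSum

lemma freq_eq_zero_iff (r : MoyalIndex N) : freq N r = 0 ↔ r.1.1 = r.1.2 ∧ r.2.1 = r.2.2 := by
  obtain ⟨⟨n, m⟩, k, j⟩ := r
  show (m : ℤ) - n + (k - j) * N = 0 ↔ n = m ∧ k = j
  constructor
  · intro h
    have hnm : (m : ℤ) - n = 0 :=
      Int.eq_zero_of_abs_lt_dvd (m := N) ⟨j - k, by linarith⟩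
        (abs_sub_lt_iff.2 ⟨by omega, by omega⟩)
    have hN : (N : ℤ) ≠ 0 := by omega
    refine ⟨Fin.ext (by omega), ?_⟩
    have := (mul_eq_zero.1 (show (k - j) * (N : ℤ) = 0 by linarith)).resolve_right hN
    linarith
  · rintro ⟨rfl, rfl⟩
    ring

lemma continuous_crossTerm (hc₁ : Continuous g₁) (hc₂ : Continuous g₂) (r : MoyalIndex N) :
    Continuous (crossTerm g₁ g₂ N r) := by
  unfold crossTerm
  fun_prop

lemma norm_integral_crossTerm_le (hc₁ : Continuous g₁) (hc₂ : Continuous g₂)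
    (r : MoyalIndex N) :
    ‖∫ x in (0 : ℝ)..1, crossTerm g₁ g₂ N r x‖ ≤ envelope g₁ r.2.1 * envelope g₂ r.2.2 := by
  have h := intervalIntegral.norm_integral_le_of_norm_le_const fun x hx =>
    norm_crossTerm_le hc₁ hc₂ r
      (Set.Ioc_subset_Icc_self (by rwa [Set.uIoc_of_le zero_le_one] at hx))
  rwa [sub_zero, abs_one, mul_one] at h

theorem hasSum_integral_moyalTerm (hN : N ≠ 0) (hc₁ : Continuous g₁) (hc₂ : Continuous g₂)
    (hg₁ : Summable (localSup g₁)) (hg₂ : Summable (localSup g₂)) (a b : Fin N → ℂ) (ξ : ℝ) :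
    HasSum (fun r => a r.1.1 * conj (b r.1.2) * (∫ x in (0 : ℝ)..1, crossTerm g₁ g₂ N r x) *
        exp (2 * π * I * ((freq N r / N * ξ : ℝ) : ℂ)))
      (∫ x in (0 : ℝ)..1, stftSN g₁ N a x ξ * conj (stftSN g₂ N b x ξ)) := by
  have hx {x : ℝ} (hx : x ∈ Ι (0 : ℝ) 1) : x ∈ Set.Icc (0 : ℝ) 1 :=
    Set.Ioc_subset_Icc_self (by rwa [Set.uIoc_of_le zero_le_one] at hx)
  refine (hasSum_intervalIntegral_of_norm_le (F := fun r x => moyalTerm g₁ g₂ N a b r x ξ)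
    (fun r => by unfold moyalTerm; have := continuous_crossTerm hc₁ hc₂ r; fun_prop)
    (summable_moyalBound hg₁ hg₂ a b)
    (fun r x hxI => norm_coeff_mul_exp_le _ _ (norm_crossTerm_le hc₁ hc₂ r (hx hxI)) _)
    (fun x hxI => hasSum_moyalTerm hN hc₁ hc₂ hg₁ hg₂ a b (hx hxI) ξ)).congr_fun fun r => ?_
  simp only [moyalTerm]
  rw [intervalIntegral.integral_mul_const, intervalIntegral.integral_const_mul]

theorem hasSum_integral_integral_stftSN_mul_conj (hN : N ≠ 0) (hc₁ : Continuous g₁)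
    (hc₂ : Continuous g₂) (hg₁ : Summable (localSup g₁)) (hg₂ : Summable (localSup g₂))
    (a b : Fin N → ℂ) :
    HasSum (fun p : Fin N × ℤ =>
        N * (a p.1 * conj (b p.1)) *
          ∫ x in (0 : ℝ)..1, crossTerm g₁ g₂ N ((p.1, p.1), (p.2, p.2)) x)
      (∫ ξ in (0 : ℝ)..N, ∫ x in (0 : ℝ)..1, stftSN g₁ N a x ξ * conj (stftSN g₂ N b x ξ)) := by
  have h := hasSum_intervalIntegral_of_norm_le (a := 0) (b := (N : ℝ))
    (F := fun r ξ => a r.1.1 * conj (b r.1.2) * (∫ x in (0 : ℝ)..1, crossTerm g₁ g₂ N r x) *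
        exp (2 * π * I * ((freq N r / N * ξ : ℝ) : ℂ)))
    (fun r => by fun_prop) (summable_moyalBound hg₁ hg₂ a b)
    (fun r _ _ => norm_coeff_mul_exp_le _ _ (norm_integral_crossTerm_le hc₁ hc₂ r) _)
    (fun ξ _ => hasSum_integral_moyalTerm hN hc₁ hc₂ hg₁ hg₂ a b ξ)
  simp only [intervalIntegral.integral_const_mul, integral_exp_two_pi_I_intCast_div hN] at h
  rw [← (Function.Injective.hasSum_iff (g := fun p : Fin N × ℤ => ((p.1, p.1), (p.2, p.2)))
    (fun p q h => Prod.ext (congrArg (·.1.1) h) (congrArg (·.2.1) h)) fun r hr => ?_)] at h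
  · refine h.congr_fun fun p => ?_
    rw [Function.comp_apply, if_pos ((freq_eq_zero_iff _).2 ⟨rfl, rfl⟩)]
    ring
  · rw [if_neg (mt (freq_eq_zero_iff r).1 ?_), mul_zero]
    rintro ⟨h₁, h₂⟩
    exact hr ⟨(r.1.1, r.2.1), by ext <;> simp [h₁, h₂]⟩

theorem hasSum_integral_crossTerm_diag
    (hf : Integrable fun t => g₂ t * conj (g₁ t)) (n : Fin N) :
    HasSum (fun k : ℤ => ∫ x in (0 : ℝ)..1, crossTerm g₁ g₂ N ((n, n), (k, k)) x)
      (∫ t, g₂ t * conj (g₁ t)) := by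
  have h := hasSum_intervalIntegral_comp_add_intCast (hf.comp_sub_left ((n : ℝ) / N))
  rw [integral_sub_left_eq_self (fun t => g₂ t * conj (g₁ t))] at h
  refine h.congr_fun fun k => intervalIntegral.integral_congr fun x _ => ?_
  rw [crossTerm, sub_add_eq_sub_sub, mul_comm]

end Moyal

end

theorem moyal_flat_torus (N : ℕ) (hN : 1 ≤ N) (g₁ g₂ : ℝ → ℂ)
    (hc₁ : Continuous g₁) (hc₂ : Continuous g₂)
    (hL₁ : MemLp g₁ 2 (volume : Measure ℝ)) (hL₂ : MemLp g₂ 2 (volume : Measure ℝ))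
    (hg₁ : Summable fun k : ℤ => ⨆ t : Set.Icc (0 : ℝ) 1, ‖g₁ ((t : ℝ) + k)‖)
    (hg₂ : Summable fun k : ℤ => ⨆ t : Set.Icc (0 : ℝ) 1, ‖g₂ ((t : ℝ) + k)‖)
    (a b : Fin N → ℂ) :
    (∫ ξ in (0 : ℝ)..N, ∫ x in (0 : ℝ)..1,
        stftSN g₁ N a x ξ * (starRingEnd ℂ) (stftSN g₂ N b x ξ)) =
      N * (∑ n : Fin N, a n * (starRingEnd ℂ) (b n)) *
        ∫ t : ℝ, g₂ t * (starRingEnd ℂ) (g₁ t) := by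
  have hf : Integrable fun t => g₂ t * conj (g₁ t) := hL₂.integrable_mul hL₁.star
  have h :=
    (hasSum_integral_integral_stftSN_mul_conj (by omega) hc₁ hc₂ hg₁ hg₂ a b).prod_fiberwise
      fun n => (hasSum_integral_crossTerm_diag hf n).mul_left (N * (a n * conj (b n)))
  rw [← (hasSum_fintype _).unique h, Finset.mul_sum, Finset.sum_mul]
end

section
/- Let g : ℝ → ℂ be continuous with ∑_{k∈ℤ} sup_{t∈[0,1]}|g(t+k)| < ∞ and g ∈ L²(ℝ). Then for every y ∈ ℝ, ∫_0^1 ∫_0^1 |Zg(y - x, ξ)|² dx dξ = ‖g‖²_{L²(ℝ)}, where Zg(x,ξ) = ∑_{k∈ℤ} g(x-k)e^{2πikξ}. -/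
open Complex MeasureTheory

open Set

/-! For fixed `x`, `ξ ↦ Zg(x, ξ)` is an absolutely convergent Fourier series with coefficients
`g (x - k)`, so Parseval's identity gives `∫₀¹ |Zg(x, ξ)|² dξ = ∑ₖ |g (x - k)|²`. The summable
local suprema make the series for `Zg` converge uniformly on strips, so `Zg` is jointly continuous
there and the two integrals may be swapped. What remains is the integral of the `1`-periodisation
of `|g|²` over the period `(y - 1, y]`, which unfolds to `∫_ℝ |g|²`. -/

open ContinuousMap AddCircle in
theorem integral_norm_sq_tsum_fourier {T : ℝ} [Fact (0 < T)] {c : ℤ → ℂ} (hc : Summable c) :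
    ∫ t : AddCircle T, ‖∑' k, c k * fourier k t‖ ^ 2 ∂haarAddCircle = ∑' k, ‖c k‖ ^ 2 := by
  have hF : HasSum (fun k => c k • fourier (T := T) k) (∑' k, c k • fourier k) := by
    refine Summable.hasSum (.of_norm ?_)
    simpa only [norm_smul, fourier_norm, mul_one] using hc.norm
  set F := ∑' k, c k • fourier (T := T) k
  have hc2 : Memℓp c 2 :=
    (memℓp_gen (p := 1) (by simpa using hc.norm)).of_exponent_ge (by norm_num)
  have hLp : toLp (E := ℂ) 2 haarAddCircle ℂ F = fourierBasis.repr.symm ⟨c, hc2⟩ := by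
    refine ((toLp (E := ℂ) 2 haarAddCircle ℂ).hasSum hF).unique ?_
    simpa using (fourierBasis (T := T)).hasSum_repr_symm ⟨c, hc2⟩
  have hcoeff : fourierCoeff (toLp (E := ℂ) 2 haarAddCircle ℂ F) = c := by
    ext n
    rw [← fourierBasis_repr, hLp, LinearIsometryEquiv.apply_symm_apply]
  calc ∫ t, ‖∑' k, c k * fourier k t‖ ^ 2 ∂haarAddCircle
      = ∫ t, ‖toLp (E := ℂ) 2 haarAddCircle ℂ F t‖ ^ 2 ∂haarAddCircle := by
        refine integral_congr_ae ?_
        filter_upwards [coeFn_toLp (E := ℂ) (p := 2) (μ := haarAddCircle) (𝕜 := ℂ) F] with t ht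
        rw [ht, ← (hasSum_apply hF t).tsum_eq]
        rfl
    _ = ∑' k, ‖c k‖ ^ 2 := by rw [← tsum_sq_fourierCoeff, hcoeff]

theorem intervalIntegral_norm_sq_tsum_exp {c : ℤ → ℂ} (hc : Summable c) :
    ∫ ξ in (0 : ℝ)..1, ‖∑' k : ℤ, c k * exp (2 * Real.pi * I * k * ξ)‖ ^ 2 =
      ∑' k, ‖c k‖ ^ 2 := by
  rw [← integral_norm_sq_tsum_fourier (T := 1) hc, AddCircle.integral_haarAddCircle, inv_one,
    one_smul, ← AddCircle.intervalIntegral_preimage 1 0, zero_add]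
  simp only [fourier_coe_apply, ofReal_one, div_one]

section Unfolding

variable {E : Type*} [NormedAddCommGroup E] [NormedSpace ℝ E] {f : ℝ → E}

theorem MeasureTheory.Integrable.hasSum_intervalIntegral_comp_sub_int (hf : Integrable f)
    (t : ℝ) :
    HasSum (fun n : ℤ => ∫ x in t..t + 1, f (x - n)) (∫ x, f x) := by
  have shift : ∀ n : ℤ,
      ∫ x in t..t + 1, f (x - n) = ∫ x in t + ((-n : ℤ) : ℝ)..t + ((-n : ℤ) : ℝ) + 1, f x := by
    intro n
    rw [intervalIntegral.integral_comp_sub_right]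
    push_cast
    ring_nf
  rw [funext shift]
  exact (Equiv.neg ℤ).hasSum_iff.mpr (hf.hasSum_intervalIntegral t)

theorem MeasureTheory.Integrable.intervalIntegral_tsum_comp_sub_int (hf : Integrable f) (t : ℝ) :
    ∫ x in t..t + 1, ∑' n : ℤ, f (x - n) = ∫ x, f x := by
  have hsum := hf.hasSum_intervalIntegral_comp_sub_int t
  have hsum_norm := hf.norm.hasSum_intervalIntegral_comp_sub_int t
  have hle : t ≤ t + 1 := by linarith
  simp only [intervalIntegral.integral_of_le hle] at hsum hsum_norm ⊢
  rw [← hsum.tsum_eq, integral_tsum_of_summable_integral_norm]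
  · exact fun n => (hf.comp_sub_right n).integrableOn
  · exact hsum_norm.summable

end Unfolding

section LocalSupNorm

variable {E : Type*} [SeminormedAddCommGroup E] {g : ℝ → E}

-- Summability of this sequence says that `g` lies in the Wiener amalgam space `W(C, ℓ¹)`.
noncomputable def localSupNorm (g : ℝ → E) (k : ℤ) : ℝ := ⨆ t : Icc (0 : ℝ) 1, ‖g (t + k)‖

theorem localSupNorm_nonneg (g : ℝ → E) (k : ℤ) : 0 ≤ localSupNorm g k :=
  Real.iSup_nonneg fun _ => norm_nonneg _

theorem norm_le_localSupNorm_floor (hc : Continuous g) (u : ℝ) : ‖g u‖ ≤ localSupNorm g ⌊u⌋ := by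
  have hbdd : BddAbove (range fun t : Icc (0 : ℝ) 1 => ‖g (t + ⌊u⌋)‖) :=
    (isCompact_range (by fun_prop)).bddAbove
  have hfract : Int.fract u ∈ Icc (0 : ℝ) 1 := ⟨Int.fract_nonneg u, (Int.fract_lt_one u).le⟩
  simpa [localSupNorm, Int.fract_add_floor] using le_ciSup hbdd ⟨Int.fract u, hfract⟩

theorem norm_sub_intCast_le_localSupNorm (hc : Continuous g) {a u : ℝ} (hu : u ∈ Icc a (a + 1))
    (k : ℤ) :
    ‖g (u - k)‖ ≤ localSupNorm g (⌊a⌋ - k) + localSupNorm g (⌊a⌋ + 1 - k) := by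
  have hlow : ⌊a⌋ ≤ ⌊u⌋ := Int.floor_mono hu.1
  have hup : ⌊u⌋ ≤ ⌊a⌋ + 1 := by simpa using Int.floor_mono hu.2
  have hbound := norm_le_localSupNorm_floor hc (u - k)
  rw [Int.floor_sub_intCast] at hbound
  rcases (by omega : ⌊u⌋ = ⌊a⌋ ∨ ⌊u⌋ = ⌊a⌋ + 1) with h | h <;> rw [h] at hbound
  · exact hbound.trans (le_add_of_nonneg_right (localSupNorm_nonneg g _))
  · exact hbound.trans (le_add_of_nonneg_left (localSupNorm_nonneg g _))

theorem Summable.localSupNorm_sub_add (hg : Summable (localSupNorm g)) (n : ℤ) :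
    Summable fun k : ℤ => localSupNorm g (n - k) + localSupNorm g (n + 1 - k) :=
  (hg.comp_injective sub_right_injective).add (hg.comp_injective sub_right_injective)

theorem summable_norm_sub_intCast (hc : Continuous g) (hg : Summable (localSupNorm g)) (u : ℝ) :
    Summable fun k : ℤ => ‖g (u - k)‖ :=
  .of_nonneg_of_le (fun _ => norm_nonneg _)
    (norm_sub_intCast_le_localSupNorm hc ⟨le_rfl, by linarith⟩) (hg.localSupNorm_sub_add _)

end LocalSupNorm

theorem intervalIntegral_integral_swap_of_continuousOn {E : Type*} [NormedAddCommGroup E]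
    [NormedSpace ℝ E] {f : ℝ → ℝ → E} {a b c d : ℝ} (hab : a ≤ b) (hcd : c ≤ d)
    (hf : ContinuousOn (Function.uncurry f) (Icc a b ×ˢ Icc c d)) :
    ∫ x in a..b, ∫ y in c..d, f x y = ∫ y in c..d, ∫ x in a..b, f x y := by
  simp only [intervalIntegral.integral_of_le hab, intervalIntegral.integral_of_le hcd]
  refine integral_integral_swap ?_
  rw [Measure.prod_restrict]
  exact (hf.integrableOn_compact (isCompact_Icc.prod isCompact_Icc)).mono_set
    (prod_mono Ioc_subset_Icc_self Ioc_subset_Icc_self)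

theorem continuousOn_zak {g : ℝ → ℂ} (hc : Continuous g) (hg : Summable (localSupNorm g))
    (a : ℝ) :
    ContinuousOn (fun p : ℝ × ℝ => zak g p.1 p.2) (Icc a (a + 1) ×ˢ univ) := by
  refine continuousOn_tsum (fun k => Continuous.continuousOn (by fun_prop))
    (hg.localSupNorm_sub_add ⌊a⌋) fun k p hp => ?_
  simpa [norm_exp] using norm_sub_intCast_le_localSupNorm hc hp.1 k

theorem zak_shifted_unitarity (g : ℝ → ℂ) (hc : Continuous g)
    (hL : MemLp g 2 (volume : Measure ℝ))
    (hg : Summable fun k : ℤ => ⨆ t : Set.Icc (0 : ℝ) 1, ‖g ((t : ℝ) + k)‖)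
    (y : ℝ) :
    (∫ ξ in (0 : ℝ)..1, ∫ x in (0 : ℝ)..1, ‖zak g (y - x) ξ‖ ^ 2) =
      ∫ t : ℝ, ‖g t‖ ^ 2 := by
  replace hg : Summable (localSupNorm g) := hg
  have hcont : ContinuousOn (Function.uncurry fun x ξ => ‖zak g (y - x) ξ‖ ^ 2)
      (Icc 0 1 ×ˢ Icc 0 1) := by
    have hmaps : MapsTo (fun p : ℝ × ℝ => (y - p.1, p.2)) (Icc 0 1 ×ˢ Icc 0 1)
        (Icc (y - 1) (y - 1 + 1) ×ˢ univ) :=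
      fun p hp => ⟨⟨by linarith [hp.1.2], by linarith [hp.1.1]⟩, mem_univ _⟩
    exact ((continuousOn_zak hc hg (y - 1)).comp (by fun_prop) hmaps).norm.pow 2
  calc ∫ ξ in (0 : ℝ)..1, ∫ x in (0 : ℝ)..1, ‖zak g (y - x) ξ‖ ^ 2
      = ∫ x in (0 : ℝ)..1, ∫ ξ in (0 : ℝ)..1, ‖zak g (y - x) ξ‖ ^ 2 :=
        (intervalIntegral_integral_swap_of_continuousOn zero_le_one zero_le_one hcont).symm
    _ = ∫ x in (0 : ℝ)..1, ∑' k : ℤ, ‖g (y - x - k)‖ ^ 2 :=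
        intervalIntegral.integral_congr fun x _ =>
          intervalIntegral_norm_sq_tsum_exp (summable_norm_sub_intCast hc hg (y - x)).of_norm
    _ = ∫ u in y - 1..y - 1 + 1, ∑' k : ℤ, ‖g (u - k)‖ ^ 2 := by
        rw [intervalIntegral.integral_comp_sub_left (fun u => ∑' k : ℤ, ‖g (u - k)‖ ^ 2)]
        simp
    _ = ∫ t : ℝ, ‖g t‖ ^ 2 :=
        (hL.integrable_norm_pow two_ne_zero).intervalIntegral_tsum_comp_sub_int (y - 1)
end
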